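/- Let R be a transient symmetric random walk on ℤ, let A be a set with finite capacity, let x ∉ A, and set A' = A ∪ {x}. Then cap(A') - cap(A) = E_A(x) · E'_A(x), where E_A(x) = P_x(T_A = ∞) and E'_A(x) = P_x(T_{A'} = ∞). In particular, cap(A') - cap(A) lies in the interval [E'_A(x)^2, E_A(x)^2]. -/

import Mathlib

open MeasureTheory Filter Finset

noncomputable section

/-- Position at time `n` of the random walk started at `x` whose increments are `ω`. -/
def walkPos (x : ℤ) (ω : ℕ → ℤ) (n : ℕ) : ℤ := x + ∑ i ∈ Finset.range n, ω i

/-- The event that the walk started at `x` never visits `A` at a positive time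
(`T_A = ∞`). -/
def escapes (x : ℤ) (A : Set ℤ) : Set (ℕ → ℤ) :=
  {ω | ∀ n : ℕ, 0 < n → walkPos x ω n ∉ A}

/-- The event that the walk started at `x` hits `A` at some positive time (`T_A < ∞`). -/
def hits (x : ℤ) (A : Set ℤ) : Set (ℕ → ℤ) :=
  {ω | ∃ n : ℕ, 0 < n ∧ walkPos x ω n ∈ A}

/-- The event that the walk started at `x` first hits `A` at the point `a`
(`T_A < ∞` and `R_{T_A} = a`). -/
def hitsAt (x : ℤ) (A : Set ℤ) (a : ℤ) : Set (ℕ → ℤ) :=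
  {ω | ∃ n : ℕ, 0 < n ∧ walkPos x ω n = a ∧
      ∀ m : ℕ, 0 < m → m < n → walkPos x ω m ∉ A}

/-- `μ` is the law of the iid increment sequence of a random walk on `ℤ` with
step distribution `p`. -/
def IsRandomWalk (μ : Measure (ℕ → ℤ)) (p : ℤ → ENNReal) : Prop :=
  IsProbabilityMeasure μ ∧ (∑' x : ℤ, p x) = 1 ∧
    ∀ (s : Finset ℕ) (f : ℕ → ℤ),
      μ {ω | ∀ i ∈ s, ω i = f i} = ∏ i ∈ s, p (f i)

/-- The Green function `G(x) = Σ_n P_0(R_n = x)`, with values in `ℝ≥0∞`. -/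
def greenE (μ : Measure (ℕ → ℤ)) (x : ℤ) : ENNReal :=
  ∑' n : ℕ, μ {ω | walkPos 0 ω n = x}

/-- The real-valued Green function. -/
def greenR (μ : Measure (ℕ → ℤ)) (x : ℤ) : ℝ := (greenE μ x).toReal

/-- The walk is transient: the Green function is finite. -/
def Transient (μ : Measure (ℕ → ℤ)) : Prop := greenE μ 0 ≠ ⊤

/-- The walk is irreducible: every point is reachable from `0`. -/
def Irreducible' (μ : Measure (ℕ → ℤ)) : Prop :=
  ∀ x : ℤ, ∃ n : ℕ, 0 < μ {ω | walkPos 0 ω n = x}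

/-- The escape probability `E_A(x) = P_x(T_A = ∞)`. -/
def escProb (μ : Measure (ℕ → ℤ)) (A : Set ℤ) (x : ℤ) : ℝ := (μ (escapes x A)).toReal

/-- The capacity of a finite set: the sum of the escape probabilities. -/
def capR (μ : Measure (ℕ → ℤ)) (A : Finset ℤ) : ℝ := ∑ a ∈ A, escProb μ (↑A) a

/-- The diameter `max A - min A` of a finite subset of `ℤ`. -/
def finDiam (A : Finset ℤ) : ℤ := WithBot.unbotD 0 A.max - WithTop.untopD 0 A.min

/-- The diameter, as a real number. -/
def diamR (A : Finset ℤ) : ℝ := (finDiam A : ℝ)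

/-- An `α`-walk: a symmetric random walk whose one-step probabilities satisfy
`p x ≈ |x| ^ (-1-α)`. -/
def IsAlphaWalk (μ : Measure (ℕ → ℤ)) (p : ℤ → ENNReal) (α : ℝ) : Prop :=
  IsRandomWalk μ p ∧ (∀ x : ℤ, p (-x) = p x) ∧
    ∃ c C : ℝ, 0 < c ∧ 0 < C ∧ ∀ x : ℤ, x ≠ 0 →
      ENNReal.ofReal (c * |(x : ℝ)| ^ (-1 - α)) ≤ p x ∧
        p x ≤ ENNReal.ofReal (C * |(x : ℝ)| ^ (-1 - α))

/-- The DLA process driven by a transient random walk: a Markov chain of growing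
finite subsets of `ℤ`, starting from `{0}`, where given the history up to time `n`,
a new point `x ∉ A_n` is attached with probability
`Σ_{a ∈ A_n} p_{x,a} E_{A_n}(x) / cap(A_n)`. -/
structure IsDLA (μ : Measure (ℕ → ℤ)) (p : ℤ → ENNReal) {Ω : Type}
    [MeasurableSpace Ω] (P : Measure Ω) (A : ℕ → Ω → Finset ℤ) : Prop where
  prob : IsProbabilityMeasure P
  init : ∀ᵐ ω ∂P, A 1 ω = {0}
  grow : ∀ n : ℕ, 1 ≤ n → ∀ᵐ ω ∂P, ∃ x ∉ A n ω, A (n + 1) ω = insert x (A n ω)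
  markov : ∀ n : ℕ, 1 ≤ n → ∀ H : ℕ → Finset ℤ, ∀ x : ℤ, x ∉ H n →
    P {ω | A (n + 1) ω = insert x (H n) ∧ ∀ k, 1 ≤ k → k ≤ n → A k ω = H k}
      = (∑ a ∈ H n, p (a - x)) * μ (escapes x ↑(H n))
          / (∑ b ∈ H n, μ (escapes b ↑(H n)))
        * P {ω | ∀ k, 1 ≤ k → k ≤ n → A k ω = H k}

/-- The event that the walk from `y` first hits `A` at `a`, the last site visited
before hitting `A` being `x` (`T_A < ∞`, `R_{T_A} = a`, `R_{T_A - 1} = x`). -/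
def hitsAtVia (y : ℤ) (A : Set ℤ) (a x : ℤ) : Set (ℕ → ℤ) :=
  {ω | ∃ n : ℕ, 0 < n ∧ walkPos y ω n = a ∧ walkPos y ω (n - 1) = x ∧
      ∀ m : ℕ, 0 < m → m < n → walkPos y ω m ∉ A}

/-- The capacity of a (possibly infinite) set, with values in `ℝ≥0∞`. -/
def capSetE (μ : MeasureTheory.Measure (ℕ → ℤ)) (A : Set ℤ) : ENNReal :=
  ∑' a : A, μ (escapes a A)

/-!
Write `A' = insert x A`, `e = E_A(x)`, `e' = E_{A'}(x)`, and `H_B(y, a)` for the probability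
that the walk from `y` first visits `B` at `a`. Splitting a path that avoids `A` at its first
visit to `A'`, necessarily at `x`, and applying the Markov property there gives
`E_A(y) = E_{A'}(y) + H_{A'}(y, x) e`. For a symmetric walk, reversing a first-hit path shows
`H_{A'}(a, x) = H_{A'}(x, a)`, so summing over `a ∈ A` gives `cap A = Σ_{a ∈ A} E_{A'}(a) + β e`
with `β = Σ_{a ∈ A} H_{A'}(x, a)`, while `cap A' = e' + Σ_{a ∈ A} E_{A'}(a)`. Taking `y = x` and
using `e' + H_{A'}(x, x) + β = 1` yields `e' = β e + e e'`, hence `cap A' = cap A + e e'`.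
-/

def pointCylinder (s : Finset ℕ) (f : ℕ → ℤ) : Set (ℕ → ℤ) := {ω | ∀ i ∈ s, ω i = f i}

def shiftSeq (n : ℕ) (ω : ℕ → ℤ) : ℕ → ℤ := fun i => ω (n + i)

def initSeg (n : ℕ) (ω : ℕ → ℤ) : Fin n → ℤ := fun i => ω i

def padZero {n : ℕ} (v : Fin n → ℤ) : ℕ → ℤ := fun i => if h : i < n then v ⟨i, h⟩ else 0

def reverseIncr (n : ℕ) (ω : ℕ → ℤ) : ℕ → ℤ := padZero fun i : Fin n => -ω i.rev

lemma measurableSet_pointCylinder (s : Finset ℕ) (f : ℕ → ℤ) :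
    MeasurableSet (pointCylinder s f) := by
  have : pointCylinder s f = ⋂ i ∈ s, (fun ω : ℕ → ℤ => ω i) ⁻¹' {f i} := by
    ext ω; simp [pointCylinder]
  rw [this]
  exact .biInter s.countable_toSet fun i _ => measurable_pi_apply i (measurableSet_singleton _)

lemma pointCylinder_inter_pointCylinder {s t : Finset ℕ} {f g : ℕ → ℤ}
    (hfg : ∀ i ∈ s, i ∈ t → f i = g i) :
    pointCylinder s f ∩ pointCylinder t g = pointCylinder (s ∪ t) (s.piecewise f g) := by
  ext ω
  simp only [pointCylinder, Set.mem_inter_iff, Set.mem_ofPred_eq, Finset.mem_union]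
  refine ⟨fun ⟨hs, ht⟩ i hi => ?_, fun h => ⟨fun i hi => ?_, fun i hi => ?_⟩⟩
  · by_cases his : i ∈ s
    · simp [his, hs i his]
    · simp [his, ht i (hi.resolve_left his)]
  · simpa [hi] using h i (.inl hi)
  · by_cases his : i ∈ s
    · simpa [his, hfg i his hi] using h i (.inl his)
    · simpa [his] using h i (.inr hi)

lemma isPiSystem_pointCylinder :
    IsPiSystem {C | ∃ s f, C = pointCylinder s f} := by
  rintro _ ⟨s, f, rfl⟩ _ ⟨t, g, rfl⟩ ⟨ω, hs, ht⟩
  exact ⟨s ∪ t, _, pointCylinder_inter_pointCylinder fun i his hit =>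
    (hs i his).symm.trans (ht i hit)⟩

lemma generateFrom_pointCylinder :
    MeasurableSpace.generateFrom {C | ∃ s f, C = pointCylinder s f} = MeasurableSpace.pi := by
  refine le_antisymm (MeasurableSpace.generateFrom_le ?_) ?_
  · rintro _ ⟨s, f, rfl⟩
    exact measurableSet_pointCylinder s f
  · refine iSup_le fun i => MeasurableSpace.comap_le_iff_le_map.2 fun t _ => ?_
    have : (fun ω : ℕ → ℤ => ω i) ⁻¹' t = ⋃ k ∈ t, pointCylinder {i} fun _ => k := by
      ext ω; simp [pointCylinder]
    show MeasurableSet[MeasurableSpace.generateFrom _] ((fun ω : ℕ → ℤ => ω i) ⁻¹' t)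
    rw [this]
    exact .biUnion t.to_countable fun k _ => .basic _ ⟨{i}, _, rfl⟩

lemma measurable_shiftSeq (n : ℕ) : Measurable (shiftSeq n) :=
  measurable_pi_lambda _ fun i => measurable_pi_apply (n + i)

lemma measurable_initSeg (n : ℕ) : Measurable (initSeg n) :=
  measurable_pi_lambda _ fun i => measurable_pi_apply (i : ℕ)

lemma shiftSeq_preimage_pointCylinder (n : ℕ) (s : Finset ℕ) (f : ℕ → ℤ) :
    shiftSeq n ⁻¹' pointCylinder s f
      = pointCylinder (s.map (addLeftEmbedding n)) fun i => f (i - n) := by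
  ext ω
  simp [pointCylinder, shiftSeq]

lemma initSeg_preimage_singleton {n : ℕ} (v : Fin n → ℤ) :
    initSeg n ⁻¹' {v} = pointCylinder (range n) (padZero v) := by
  ext ω
  simp +contextual [pointCylinder, initSeg, padZero, funext_iff, Fin.forall_iff]

lemma initSeg_preimage_padZero_preimage {n : ℕ} {E : Set (ℕ → ℤ)}
    (hE : DependsOn (· ∈ E) (Set.Iio n)) : initSeg n ⁻¹' (padZero ⁻¹' E) = E :=
  Set.ext fun ω => iff_of_eq <| hE fun i hi => by simp [padZero, initSeg, Set.mem_Iio.1 hi]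

lemma measurableSet_of_dependsOn {n : ℕ} {E : Set (ℕ → ℤ)}
    (hE : DependsOn (· ∈ E) (Set.Iio n)) : MeasurableSet E :=
  initSeg_preimage_padZero_preimage hE ▸ measurable_initSeg n (.of_discrete)

namespace IsRandomWalk

variable {μ : Measure (ℕ → ℤ)} {p : ℤ → ENNReal}

lemma measure_pointCylinder (hw : IsRandomWalk μ p) (s : Finset ℕ) (f : ℕ → ℤ) :
    μ (pointCylinder s f) = ∏ i ∈ s, p (f i) :=
  hw.2.2 s f

lemma measure_pointCylinder_inter_of_disjoint (hw : IsRandomWalk μ p) {s t : Finset ℕ}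
    (hst : Disjoint s t) (f g : ℕ → ℤ) :
    μ (pointCylinder s f ∩ pointCylinder t g) = μ (pointCylinder s f) * μ (pointCylinder t g) := by
  rw [pointCylinder_inter_pointCylinder fun i his hit => absurd hit (disjoint_left.1 hst his),
    hw.measure_pointCylinder, hw.measure_pointCylinder, hw.measure_pointCylinder,
    prod_union hst]
  congr 1
  · exact prod_congr rfl fun i hi => by rw [piecewise_eq_of_mem _ _ _ hi]
  · exact prod_congr rfl fun i hi => by rw [piecewise_eq_of_notMem _ _ _ (disjoint_right.1 hst hi)]

lemma map_initSeg_singleton (hw : IsRandomWalk μ p) {n : ℕ} (v : Fin n → ℤ) :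
    μ.map (initSeg n) {v} = ∏ i, p (v i) := by
  rw [Measure.map_apply (measurable_initSeg n) (measurableSet_singleton v),
    initSeg_preimage_singleton, hw.measure_pointCylinder, ← Fin.prod_univ_eq_prod_range]
  simp [padZero]

lemma measure_initSeg_preimage_singleton_inter_shiftSeq (hw : IsRandomWalk μ p) {n : ℕ}
    (v : Fin n → ℤ) {C : Set (ℕ → ℤ)} (hC : MeasurableSet C) :
    μ (initSeg n ⁻¹' {v} ∩ shiftSeq n ⁻¹' C) = μ (initSeg n ⁻¹' {v}) * μ C := by
  have : IsProbabilityMeasure μ := hw.1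
  have hv : MeasurableSet (initSeg n ⁻¹' {v}) := measurable_initSeg n (measurableSet_singleton v)
  have key : (μ.restrict (initSeg n ⁻¹' {v})).map (shiftSeq n) = μ (initSeg n ⁻¹' {v}) • μ := by
    refine ext_of_generate_finite _ generateFrom_pointCylinder.symm isPiSystem_pointCylinder
      ?_ (by simp [Measure.map_apply (measurable_shiftSeq n) .univ])
    rintro _ ⟨s, f, rfl⟩
    have hdisj : Disjoint (range n) (s.map (addLeftEmbedding n)) := by
      simp only [disjoint_left, mem_range, Finset.mem_map, addLeftEmbedding_apply]
      rintro a ha ⟨i, -, rfl⟩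
      omega
    rw [Measure.map_apply (measurable_shiftSeq n) (measurableSet_pointCylinder s f),
      Measure.restrict_apply' hv, Measure.smul_apply, smul_eq_mul, Set.inter_comm,
      initSeg_preimage_singleton, shiftSeq_preimage_pointCylinder,
      hw.measure_pointCylinder_inter_of_disjoint hdisj, ← initSeg_preimage_singleton,
      hw.measure_pointCylinder, hw.measure_pointCylinder, prod_map]
    simp
  rw [Set.inter_comm, ← Measure.restrict_apply' hv,
    ← Measure.map_apply (measurable_shiftSeq n) hC, key, Measure.smul_apply, smul_eq_mul]

theorem measure_inter_shiftSeq_preimage (hw : IsRandomWalk μ p) {n : ℕ} {E C : Set (ℕ → ℤ)}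
    (hE : DependsOn (· ∈ E) (Set.Iio n)) (hC : MeasurableSet C) :
    μ (E ∩ shiftSeq n ⁻¹' C) = μ E * μ C := by
  have hC' : MeasurableSet (shiftSeq n ⁻¹' C) := measurable_shiftSeq n hC
  have key : (μ.restrict (shiftSeq n ⁻¹' C)).map (initSeg n) = μ C • μ.map (initSeg n) := by
    refine Measure.ext_of_singleton fun v => ?_
    rw [Measure.map_apply (measurable_initSeg n) (measurableSet_singleton v),
      Measure.restrict_apply' hC', hw.measure_initSeg_preimage_singleton_inter_shiftSeq v hC,
      Measure.smul_apply, smul_eq_mul, Measure.map_apply (measurable_initSeg n)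
      (measurableSet_singleton v), mul_comm]
  rw [← initSeg_preimage_padZero_preimage hE, ← Measure.restrict_apply' hC',
    ← Measure.map_apply (measurable_initSeg n) .of_discrete, key, Measure.smul_apply,
    smul_eq_mul, Measure.map_apply (measurable_initSeg n) .of_discrete, mul_comm]

lemma map_initSeg_map_neg_rev (hw : IsRandomWalk μ p) (hsym : ∀ z, p (-z) = p z) (n : ℕ) :
    (μ.map (initSeg n)).map (fun v i => -v i.rev) = μ.map (initSeg n) := by
  have hinv : Function.Involutive fun (v : Fin n → ℤ) i => -v i.rev := fun v => by simp
  refine Measure.ext_of_singleton fun v => ?_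
  have : (fun (v : Fin n → ℤ) i => -v i.rev) ⁻¹' {v} = {fun i => -v i.rev} := by
    ext w
    exact hinv.eq_iff
  rw [Measure.map_apply .of_discrete (measurableSet_singleton v), this,
    hw.map_initSeg_singleton, hw.map_initSeg_singleton]
  simp only [hsym]
  exact Fintype.prod_equiv Fin.revPerm _ _ fun i => rfl

theorem measure_reverseIncr_preimage (hw : IsRandomWalk μ p) (hsym : ∀ z, p (-z) = p z)
    {n : ℕ} {E : Set (ℕ → ℤ)} (hE : DependsOn (· ∈ E) (Set.Iio n)) :
    μ (reverseIncr n ⁻¹' E) = μ E := by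
  have : reverseIncr n ⁻¹' E
      = initSeg n ⁻¹' ((fun (v : Fin n → ℤ) i => -v i.rev) ⁻¹' (padZero ⁻¹' E)) := rfl
  rw [this, ← Measure.map_apply (measurable_initSeg n) .of_discrete,
    ← Measure.map_apply .of_discrete .of_discrete, hw.map_initSeg_map_neg_rev hsym,
    Measure.map_apply (measurable_initSeg n) .of_discrete, initSeg_preimage_padZero_preimage hE]

end IsRandomWalk

lemma walkPos_zero (y : ℤ) (ω : ℕ → ℤ) : walkPos y ω 0 = y := by
  simp [walkPos]

lemma walkPos_succ (y : ℤ) (ω : ℕ → ℤ) (n : ℕ) : walkPos y ω (n + 1) = walkPos y ω n + ω n := by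
  simp [walkPos, sum_range_succ, add_assoc]

lemma walkPos_add (y : ℤ) (ω : ℕ → ℤ) (n m : ℕ) :
    walkPos y ω (n + m) = walkPos (walkPos y ω n) (shiftSeq n ω) m := by
  simp [walkPos, shiftSeq, sum_range_add, add_assoc]

lemma walkPos_congr {y : ℤ} {ω ω' : ℕ → ℤ} {n : ℕ} (h : ∀ i < n, ω i = ω' i) :
    walkPos y ω n = walkPos y ω' n := by
  simp only [walkPos]
  exact congrArg _ (sum_congr rfl fun i hi => h i (mem_range.1 hi))

lemma walkPos_reverseIncr (y : ℤ) (ω : ℕ → ℤ) {n m : ℕ} (hm : m ≤ n) :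
    walkPos (walkPos y ω n) (reverseIncr n ω) m = walkPos y ω (n - m) := by
  induction m with
  | zero => simp [walkPos_zero]
  | succ m ih =>
    have hstep : n - m = n - (m + 1) + 1 := by omega
    rw [walkPos_succ, ih (by omega), hstep, walkPos_succ]
    simp [reverseIncr, padZero, show m < n by omega, Fin.rev]

def firstHitAt (y : ℤ) (B : Set ℤ) (a : ℤ) (n : ℕ) : Set (ℕ → ℤ) :=
  {ω | 0 < n ∧ walkPos y ω n = a ∧ ∀ m, 0 < m → m < n → walkPos y ω m ∉ B}

lemma dependsOn_firstHitAt (y : ℤ) (B : Set ℤ) (a : ℤ) (n : ℕ) :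
    DependsOn (· ∈ firstHitAt y B a n) (Set.Iio n) := by
  intro ω ω' h
  have hpos : ∀ m ≤ n, walkPos y ω m = walkPos y ω' m := fun m hm =>
    walkPos_congr fun i hi => h i (Set.mem_Iio.2 (by omega))
  refine propext (and_congr_right' (and_congr ?_ (forall₂_congr fun m _ => ?_)))
  · rw [hpos n le_rfl]
  · exact forall_congr' fun hm => by rw [hpos m hm.le]

lemma hitsAt_eq_iUnion_firstHitAt (y : ℤ) (B : Set ℤ) (a : ℤ) :
    hitsAt y B a = ⋃ n, firstHitAt y B a n := by
  ext ω
  simp [hitsAt, firstHitAt]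

lemma measurableSet_hitsAt (y : ℤ) (B : Set ℤ) (a : ℤ) : MeasurableSet (hitsAt y B a) :=
  hitsAt_eq_iUnion_firstHitAt y B a ▸
    .iUnion fun n => measurableSet_of_dependsOn (dependsOn_firstHitAt y B a n)

lemma pairwise_disjoint_firstHitAt {y : ℤ} {B : Set ℤ} {a : ℤ} (ha : a ∈ B) :
    Pairwise (Function.onFun Disjoint (firstHitAt y B a)) := by
  intro n m hnm
  refine Set.disjoint_left.2 fun ω ⟨hn, hna, hnB⟩ ⟨hm, hma, hmB⟩ => ?_
  rcases Nat.lt_or_gt_of_ne hnm with h | h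
  · exact hmB n hn h (hna ▸ ha)
  · exact hnB m hm h (hma ▸ ha)

lemma disjoint_hitsAt {y : ℤ} {B : Set ℤ} {a b : ℤ} (ha : a ∈ B) (hb : b ∈ B) (hab : a ≠ b) :
    Disjoint (hitsAt y B a) (hitsAt y B b) := by
  refine Set.disjoint_left.2 fun ω ⟨n, hn, hna, hnB⟩ ⟨m, hm, hmb, hmB⟩ => ?_
  rcases lt_trichotomy n m with h | rfl | h
  · exact hmB n hn h (hna ▸ ha)
  · exact hab (hna.symm.trans hmb)
  · exact hnB m hm h (hmb ▸ hb)

lemma measure_hitsAt {μ : Measure (ℕ → ℤ)} {y : ℤ} {B : Set ℤ} {a : ℤ} (ha : a ∈ B) :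
    μ (hitsAt y B a) = ∑' n, μ (firstHitAt y B a n) := by
  rw [hitsAt_eq_iUnion_firstHitAt, measure_iUnion (pairwise_disjoint_firstHitAt ha)
    fun n => measurableSet_of_dependsOn (dependsOn_firstHitAt y B a n)]

lemma compl_escapes (y : ℤ) (B : Set ℤ) : (escapes y B)ᶜ = ⋃ a : B, hitsAt y B a := by
  ext ω
  simp only [escapes, Set.mem_compl_iff, Set.mem_ofPred_eq, Set.mem_iUnion, not_forall,
    not_not, exists_prop]
  constructor
  · intro hex
    classical
    obtain ⟨hpos, hB⟩ := Nat.find_spec hex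
    exact ⟨⟨_, hB⟩, Nat.find hex, hpos, rfl, fun m hm hlt hmB => Nat.find_min hex hlt ⟨hm, hmB⟩⟩
  · rintro ⟨a, n, hn, hna, -⟩
    exact ⟨n, hn, hna ▸ a.2⟩

lemma measurableSet_escapes (y : ℤ) (B : Set ℤ) : MeasurableSet (escapes y B) := by
  rw [← compl_compl (escapes y B), compl_escapes]
  exact (MeasurableSet.iUnion fun a : B => measurableSet_hitsAt y B a).compl

lemma measure_escapes_add_tsum_hitsAt (μ : Measure (ℕ → ℤ)) [IsProbabilityMeasure μ]
    (y : ℤ) (B : Set ℤ) : μ (escapes y B) + ∑' a : B, μ (hitsAt y B a) = 1 := by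
  rw [← measure_iUnion (fun a b hab => disjoint_hitsAt a.2 b.2 (Subtype.coe_ne_coe.2 hab))
    fun a => measurableSet_hitsAt y B a, ← compl_escapes,
    measure_add_measure_compl (measurableSet_escapes y B), measure_univ]

lemma escapes_eq_escapes_insert_union {y x : ℤ} {A : Set ℤ} (hx : x ∉ A) :
    escapes y A = escapes y (insert x A)
      ∪ ⋃ n, firstHitAt y (insert x A) x n ∩ shiftSeq n ⁻¹' escapes x A := by
  ext ω
  simp only [Set.mem_union, Set.mem_iUnion, Set.mem_inter_iff, Set.mem_preimage]
  constructor
  · intro hω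
    by_cases hesc : ω ∈ escapes y (insert x A)
    · exact .inl hesc
    · rw [← Set.mem_compl_iff, compl_escapes] at hesc
      obtain ⟨⟨a, ha⟩, n, hn, hna, hnB⟩ := Set.mem_iUnion.1 hesc
      obtain rfl : a = x :=
        (Set.mem_insert_iff.1 ha).resolve_right fun haA => hω n hn (hna ▸ haA)
      refine .inr ⟨n, ⟨hn, hna, hnB⟩, fun k hk => ?_⟩
      rw [show a = walkPos y ω n from hna.symm, ← walkPos_add]
      exact hω (n + k) (by omega)
  · rintro (hesc | ⟨n, ⟨hn, hnx, hnB⟩, hshift⟩) m hm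
    · exact fun hA => hesc m hm (Set.mem_insert_of_mem x hA)
    · rcases lt_trichotomy m n with h | rfl | h
      · exact fun hA => hnB m hm h (Set.mem_insert_of_mem x hA)
      · exact hnx ▸ hx
      · obtain ⟨k, rfl⟩ := Nat.exists_eq_add_of_lt h
        rw [add_assoc, walkPos_add, hnx]
        exact hshift (k + 1) k.succ_pos

lemma disjoint_escapes_firstHitAt_insert (y x : ℤ) (A : Set ℤ) (n : ℕ) :
    Disjoint (escapes y (insert x A)) (firstHitAt y (insert x A) x n) :=
  Set.disjoint_left.2 fun _ hesc ⟨hn, hnx, _⟩ => hesc n hn (hnx ▸ Set.mem_insert x A)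

theorem IsRandomWalk.measure_escapes_eq_add_mul_escapes {μ : Measure (ℕ → ℤ)} {p : ℤ → ENNReal}
    (hw : IsRandomWalk μ p) (y : ℤ) {x : ℤ} {A : Set ℤ} (hx : x ∉ A) :
    μ (escapes y A)
      = μ (escapes y (insert x A)) + μ (hitsAt y (insert x A) x) * μ (escapes x A) := by
  have hmeas : ∀ n, MeasurableSet (firstHitAt y (insert x A) x n ∩ shiftSeq n ⁻¹' escapes x A) :=
    fun n => (measurableSet_of_dependsOn (dependsOn_firstHitAt _ _ _ n)).inter
      (measurable_shiftSeq n (measurableSet_escapes x A))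
  rw [escapes_eq_escapes_insert_union hx, measure_union ?_ (.iUnion hmeas),
    measure_iUnion ?_ hmeas, measure_hitsAt (Set.mem_insert x A), ← ENNReal.tsum_mul_right]
  · exact congrArg _ (tsum_congr fun n => hw.measure_inter_shiftSeq_preimage
      (dependsOn_firstHitAt _ _ _ n) (measurableSet_escapes x A))
  · exact fun n m hnm => ((pairwise_disjoint_firstHitAt (Set.mem_insert x A) hnm).mono
      Set.inter_subset_left Set.inter_subset_left)
  · exact Set.disjoint_iUnion_right.2 fun n =>
      (disjoint_escapes_firstHitAt_insert y x A n).mono_right Set.inter_subset_left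

lemma firstHitAt_subset_reverseIncr_preimage (a b : ℤ) (B : Set ℤ) (n : ℕ) :
    firstHitAt b B a n ⊆ reverseIncr n ⁻¹' firstHitAt a B b n := by
  rintro ω ⟨hn, hna, hnB⟩
  subst hna
  refine ⟨hn, ?_, fun m hm hmn => ?_⟩
  · rw [walkPos_reverseIncr b ω le_rfl, Nat.sub_self, walkPos_zero]
  · rw [walkPos_reverseIncr b ω hmn.le]
    exact hnB (n - m) (by omega) (by omega)

lemma IsRandomWalk.measure_hitsAt_comm {μ : Measure (ℕ → ℤ)} {p : ℤ → ENNReal}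
    (hw : IsRandomWalk μ p) (hsym : ∀ z, p (-z) = p z) {B : Set ℤ} {a b : ℤ}
    (ha : a ∈ B) (hb : b ∈ B) : μ (hitsAt a B b) = μ (hitsAt b B a) := by
  have hle : ∀ a b n, μ (firstHitAt b B a n) ≤ μ (firstHitAt a B b n) := fun a b n =>
    (measure_mono (firstHitAt_subset_reverseIncr_preimage a b B n)).trans_eq
      (hw.measure_reverseIncr_preimage hsym (dependsOn_firstHitAt a B b n))
  rw [measure_hitsAt hb, measure_hitsAt ha]
  exact tsum_congr fun n => le_antisymm (hle b a n) (hle a b n)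

lemma tsum_insert_of_notMem {x : ℤ} {A : Set ℤ} (hx : x ∉ A) (f : ℤ → ENNReal) :
    ∑' a : ↥(insert x A), f a = f x + ∑' a : A, f a := by
  rw [Set.insert_eq, ENNReal.summable.tsum_union_disjoint (Set.disjoint_singleton_left.2 hx)
    ENNReal.summable, tsum_singleton]

theorem IsRandomWalk.capSetE_insert {μ : Measure (ℕ → ℤ)} {p : ℤ → ENNReal}
    (hw : IsRandomWalk μ p) (hsym : ∀ z, p (-z) = p z) {x : ℤ} {A : Set ℤ} (hx : x ∉ A) :
    capSetE μ (insert x A) = capSetE μ A + μ (escapes x A) * μ (escapes x (insert x A)) := by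
  have : IsProbabilityMeasure μ := hw.1
  set e := μ (escapes x A)
  set e' := μ (escapes x (insert x A))
  set q := μ (hitsAt x (insert x A) x)
  set β := ∑' a : A, μ (hitsAt x (insert x A) a)
  set S := ∑' a : A, μ (escapes a (insert x A))
  have hrenewal : e = e' + q * e := hw.measure_escapes_eq_add_mul_escapes x hx
  have htotal : e' + (q + β) = 1 := by
    have h := measure_escapes_add_tsum_hitsAt μ x (insert x A)
    rwa [tsum_insert_of_notMem hx fun a => μ (hitsAt x (insert x A) a)] at h
  have hcapA : capSetE μ A = S + β * e := by
    rw [capSetE, ← ENNReal.tsum_mul_right, ← ENNReal.tsum_add]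
    exact tsum_congr fun a => by
      rw [hw.measure_escapes_eq_add_mul_escapes a hx, hw.measure_hitsAt_comm hsym
        (Set.mem_insert_of_mem x a.2) (Set.mem_insert x A)]
  have hcapA' : capSetE μ (insert x A) = e' + S := by
    rw [capSetE, tsum_insert_of_notMem hx fun a => μ (escapes a (insert x A))]
  have he' : e' = β * e + e * e' := by
    refine (ENNReal.add_right_inj (ENNReal.mul_ne_top (measure_ne_top μ _)
      (measure_ne_top μ _))).1 (?_ : q * e + e' = q * e + (β * e + e * e'))
    calc q * e + e' = e := by rw [add_comm, ← hrenewal]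
      _ = (e' + (q + β)) * e := by rw [htotal, one_mul]
      _ = q * e + (β * e + e * e') := by ring
  rw [hcapA', hcapA]
  conv_lhs => rw [he']
  ring

theorem capacity_increment_general
    (μ : MeasureTheory.Measure (ℕ → ℤ)) (p : ℤ → ENNReal)
    (hwalk : IsRandomWalk μ p) (hsym : ∀ x : ℤ, p (-x) = p x)
    (A : Set ℤ) (hcap : capSetE μ A ≠ ⊤) (x : ℤ) (hx : x ∉ A) :
    (capSetE μ (insert x A)).toReal - (capSetE μ A).toReal
        = escProb μ A x * escProb μ (insert x A) x ∧
      escProb μ (insert x A) x ^ 2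
        ≤ (capSetE μ (insert x A)).toReal - (capSetE μ A).toReal ∧
      (capSetE μ (insert x A)).toReal - (capSetE μ A).toReal
        ≤ escProb μ A x ^ 2 := by
  have : IsProbabilityMeasure μ := hwalk.1
  have hinc : (capSetE μ (insert x A)).toReal - (capSetE μ A).toReal
      = escProb μ A x * escProb μ (insert x A) x := by
    rw [hwalk.capSetE_insert hsym hx, ENNReal.toReal_add hcap
      (ENNReal.mul_ne_top (measure_ne_top μ _) (measure_ne_top μ _)), ENNReal.toReal_mul,
      add_sub_cancel_left, escProb, escProb]
  have hmono : escProb μ (insert x A) x ≤ escProb μ A x :=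
    ENNReal.toReal_mono (measure_ne_top μ _) <| measure_mono fun ω hω n hn hA =>
      hω n hn (Set.mem_insert_of_mem x hA)
  have hnonneg : 0 ≤ escProb μ (insert x A) x := ENNReal.toReal_nonneg
  refine ⟨hinc, ?_, ?_⟩ <;> rw [hinc] <;> nlinarith

/-- For a transient symmetric random walk, a set `A` of finite capacity
and `x ∉ A`, with `A' = A ∪ {x}`, one has `cap(A') - cap(A) = E_A(x)·E'_A(x)`, which
lies in `[E'_A(x)², E_A(x)²]`. -/
theorem capacity_increment
    (μ : MeasureTheory.Measure (ℕ → ℤ)) (p : ℤ → ENNReal)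
    (hwalk : IsRandomWalk μ p) (hsym : ∀ x : ℤ, p (-x) = p x)
    (htrans : Transient μ)
    (A : Set ℤ) (hcap : capSetE μ A ≠ ⊤) (x : ℤ) (hx : x ∉ A) :
    (capSetE μ (insert x A)).toReal - (capSetE μ A).toReal
        = escProb μ A x * escProb μ (insert x A) x ∧
      escProb μ (insert x A) x ^ 2
        ≤ (capSetE μ (insert x A)).toReal - (capSetE μ A).toReal ∧
      (capSetE μ (insert x A)).toReal - (capSetE μ A).toReal
        ≤ escProb μ A x ^ 2 :=
  capacity_increment_general μ p hwalk hsym A hcap x hx
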